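/- Let K be an algebraically closed field of characteristic p > 0 and f ∈ K[[x]] with f(0) = 0, multiplicity m, finite Milnor number μ, and q := μ + 1 = min {n ∈ supp(f) : p ∤ n}. Define k := 1 if m = q, and otherwise k := max over n ∈ supp(f) with m ≤ n < q of ⌈(q − n)/(p^{e(n)} − 1)⌉, and d := q + (k − 1). Then f is right d-determined: any g ∈ K[[x]] with j^d g = j^d f is right equivalent to f. -/

import Mathlib

/-!
A coordinate change `x ↦ x + c x^(s+1)` with `s ≥ k` does not alter `f` below degree `q + s`.
Indeed, `(x + c x^(s+1))^n = Σ_j C(n, j) c^j x^(n + s j)`, and for a monomial `x^n` of `f` with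
`n < q` we have `p^e(n) ∣ n`, so `p ∤ C(n, j)` forces `p^e(n) ∣ j`; the choice of `k` then gives
`n + s j ≥ n + s p^e(n) ≥ q + s` for every surviving term with `j > 0`. In degree `q + s` the new
coefficient is a polynomial in `c` with linear coefficient `q a_q ≠ 0`, so over the algebraically
closed `K` it can be made to match `g`. Composing these changes for `s = k, k + 1, …` converges
`x`-adically to a coordinate change taking `f` to `g`.
-/

open PowerSeries

noncomputable def milnor (K : Type*) [Field K] (f : PowerSeries K) : ℕ :=
  Module.finrank K (PowerSeries K ⧸ Ideal.span {f.derivativeFun})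

def MilnorFinite (K : Type*) [Field K] (f : PowerSeries K) : Prop :=
  Module.Finite K (PowerSeries K ⧸ Ideal.span {f.derivativeFun})

def RightEquiv (K : Type*) [Field K] (f g : PowerSeries K) : Prop :=
  ∃ Φ : PowerSeries K ≃ₐ[K] PowerSeries K, Φ f = g

namespace PowerSeries

variable {R : Type*} [CommRing R]

theorem X_pow_dvd_sub_iff {n : ℕ} {a b : R⟦X⟧} :
    (X : R⟦X⟧) ^ n ∣ a - b ↔ ∀ i < n, coeff i a = coeff i b := by
  simp only [X_pow_dvd_iff, map_sub, sub_eq_zero]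

theorem constantCoeff_eq_zero_of_X_sq_dvd_sub_X {φ : R⟦X⟧} (h : (X : R⟦X⟧) ^ 2 ∣ φ - X) :
    constantCoeff φ = 0 := by
  simpa using X_pow_dvd_sub_iff.mp h 0 (by norm_num)

theorem coeff_one_eq_one_of_X_sq_dvd_sub_X {φ : R⟦X⟧} (h : (X : R⟦X⟧) ^ 2 ∣ φ - X) :
    coeff 1 φ = 1 := by
  simpa using X_pow_dvd_sub_iff.mp h 1 (by norm_num)

noncomputable def substAlgEquiv (φ : R⟦X⟧) (h0 : constantCoeff φ = 0) (h1 : IsUnit (coeff 1 φ)) :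
    R⟦X⟧ ≃ₐ[R] R⟦X⟧ :=
  AlgEquiv.ofAlgHom (substAlgHom (HasSubst.of_constantCoeff_zero' h0))
    (substAlgHom (HasSubst.substInvOfIsUnit φ h1))
    (by
      ext1 f
      simp only [AlgHom.comp_apply, coe_substAlgHom, AlgHom.id_apply]
      rw [subst_comp_subst_apply (HasSubst.substInvOfIsUnit φ h1)
        (HasSubst.of_constantCoeff_zero' h0), subst_substInvOfIsUnit_left φ h0, X_subst])
    (by
      ext1 f
      simp only [AlgHom.comp_apply, coe_substAlgHom, AlgHom.id_apply]
      rw [subst_comp_subst_apply (HasSubst.of_constantCoeff_zero' h0)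
        (HasSubst.substInvOfIsUnit φ h1), subst_substInvOfIsUnit_right φ h0, X_subst])

@[simp]
theorem substAlgEquiv_apply (φ : R⟦X⟧) (h0 : constantCoeff φ = 0) (h1 : IsUnit (coeff 1 φ))
    (f : R⟦X⟧) : substAlgEquiv φ h0 h1 f = f.subst φ := by
  simp [substAlgEquiv, coe_substAlgHom]

theorem coeff_pow_eq_zero_of_lt {φ : R⟦X⟧} (hφ : constantCoeff φ = 0) {n D : ℕ} (h : D < n) :
    coeff D (φ ^ n) = 0 :=
  X_pow_dvd_iff.mp (pow_dvd_pow_of_dvd (X_dvd_iff.mpr hφ) n) D h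

theorem coeff_subst_eq_sum_range {φ : R⟦X⟧} (hφ : constantCoeff φ = 0) (f : R⟦X⟧) (D : ℕ) :
    coeff D (f.subst φ) = ∑ n ∈ Finset.range (D + 1), coeff n f * coeff D (φ ^ n) := by
  rw [coeff_subst' (HasSubst.of_constantCoeff_zero' hφ)]
  refine finsum_eq_sum_of_support_subset _ fun n hn => ?_
  by_contra h
  simp only [Finset.coe_range, Set.mem_Iio, not_lt] at h
  simp [coeff_pow_eq_zero_of_lt hφ (Nat.lt_of_succ_le h)] at hn

theorem X_pow_dvd_subst_sub_subst {φ ψ : R⟦X⟧} (hφ : constantCoeff φ = 0)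
    (hψ : constantCoeff ψ = 0) {N : ℕ} (h : (X : R⟦X⟧) ^ N ∣ φ - ψ) (f : R⟦X⟧) :
    (X : R⟦X⟧) ^ N ∣ f.subst φ - f.subst ψ := by
  refine X_pow_dvd_sub_iff.mpr fun i hi => ?_
  rw [coeff_subst_eq_sum_range hφ, coeff_subst_eq_sum_range hψ]
  refine Finset.sum_congr rfl fun n _ => ?_
  rw [X_pow_dvd_sub_iff.mp (h.trans (sub_dvd_pow_sub_pow φ ψ n)) i hi]

theorem exists_forall_X_pow_dvd_sub {ψ : ℕ → R⟦X⟧}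
    (h : ∀ N, (X : R⟦X⟧) ^ (N + 1) ∣ ψ (N + 1) - ψ N) :
    ∃ L : R⟦X⟧, ∀ N, (X : R⟦X⟧) ^ (N + 1) ∣ L - ψ N := by
  have hstable : ∀ i N, i ≤ N → coeff i (ψ N) = coeff i (ψ i) := by
    intro i N hiN
    induction N, hiN using Nat.le_induction with
    | base => rfl
    | succ N hiN ih => rw [← ih, X_pow_dvd_sub_iff.mp (h N) i (by omega)]
  exact ⟨mk fun i => coeff i (ψ i), fun N => X_pow_dvd_sub_iff.mpr fun i hi => by
    rw [coeff_mk, hstable i N (by omega)]⟩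

theorem exists_subst_eq_of_forall_X_pow_dvd {f g : R⟦X⟧} {a : ℕ} {ψ : ℕ → R⟦X⟧}
    (hψX : ∀ N, (X : R⟦X⟧) ^ 2 ∣ ψ N - X) (hψ : ∀ N, (X : R⟦X⟧) ^ (N + 1) ∣ ψ (N + 1) - ψ N)
    (happrox : ∀ N, (X : R⟦X⟧) ^ (a + N) ∣ f.subst (ψ N) - g) :
    ∃ L, (X : R⟦X⟧) ^ 2 ∣ L - X ∧ f.subst L = g := by
  obtain ⟨L, hL⟩ := exists_forall_X_pow_dvd_sub hψ
  have hψ0 : ∀ N, constantCoeff (ψ N) = 0 := fun N =>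
    constantCoeff_eq_zero_of_X_sq_dvd_sub_X (hψX N)
  have hL0 : constantCoeff L = 0 := by
    simpa [hψ0] using X_pow_dvd_sub_iff.mp (hL 0) 0 (by omega)
  refine ⟨L, by simpa using dvd_add (hL 1) (hψX 1), ext fun D => ?_⟩
  rw [X_pow_dvd_sub_iff.mp (X_pow_dvd_subst_sub_subst hL0 (hψ0 (D + 1))
      ((pow_dvd_pow X (Nat.le_succ (D + 1))).trans (hL (D + 1))) f) D (by omega),
    X_pow_dvd_sub_iff.mp (happrox (D + 1)) D (by omega)]

theorem exists_subst_eq_of_forall_approx {f g : R⟦X⟧} {a : ℕ} (hfg : (X : R⟦X⟧) ^ a ∣ f - g)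
    (hstep : ∀ N (F : R⟦X⟧), (X : R⟦X⟧) ^ (a + N) ∣ F - g →
      ∃ φ, (X : R⟦X⟧) ^ (N + 2) ∣ φ - X ∧ (X : R⟦X⟧) ^ (a + N + 1) ∣ F.subst φ - g) :
    ∃ ψ, (X : R⟦X⟧) ^ 2 ∣ ψ - X ∧ f.subst ψ = g := by
  -- total in `F`, so that `choose` below yields a function of `N` and `F` alone
  have hstep' : ∀ N (F : R⟦X⟧), ∃ φ, (X : R⟦X⟧) ^ (N + 2) ∣ φ - X ∧
      ((X : R⟦X⟧) ^ (a + N) ∣ F - g → (X : R⟦X⟧) ^ (a + N + 1) ∣ F.subst φ - g) := by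
    intro N F
    by_cases hF : (X : R⟦X⟧) ^ (a + N) ∣ F - g
    · obtain ⟨φ, hφX, hφ⟩ := hstep N F hF
      exact ⟨φ, hφX, fun _ => hφ⟩
    · exact ⟨X, by simp, fun h => absurd h hF⟩
  choose φ hφX hφ using hstep'
  have hφ0 : ∀ N F, constantCoeff (φ N F) = 0 := fun N F =>
    constantCoeff_eq_zero_of_X_sq_dvd_sub_X ((pow_dvd_pow X (by omega)).trans (hφX N F))
  let ψ : ℕ → R⟦X⟧ := fun N => N.rec X fun N ψN => ψN.subst (φ N (f.subst ψN))
  have hψ_succ : ∀ N, ψ (N + 1) = (ψ N).subst (φ N (f.subst (ψ N))) := fun N => rfl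
  have hψ_step : ∀ N, (X : R⟦X⟧) ^ (N + 2) ∣ ψ (N + 1) - ψ N := fun N => by
    simpa [hψ_succ, X_subst] using
      X_pow_dvd_subst_sub_subst (hφ0 _ _) constantCoeff_X (hφX N (f.subst (ψ N))) (ψ N)
  have hψX : ∀ N, (X : R⟦X⟧) ^ 2 ∣ ψ N - X := by
    intro N
    induction N with
    | zero => simp [ψ]
    | succ N ih => simpa using dvd_add ((pow_dvd_pow X (by omega)).trans (hψ_step N)) ih
  refine exists_subst_eq_of_forall_X_pow_dvd (a := a) hψX
    (fun N => (pow_dvd_pow X (by omega)).trans (hψ_step N)) fun N => ?_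
  induction N with
  | zero => simpa [ψ, X_subst] using hfg
  | succ N ih =>
    rw [hψ_succ, ← subst_comp_subst_apply
      (HasSubst.of_constantCoeff_zero' (constantCoeff_eq_zero_of_X_sq_dvd_sub_X (hψX N)))
      (HasSubst.of_constantCoeff_zero' (hφ0 _ _)), ← add_assoc]
    exact hφ N _ ih

theorem coeff_X_add_C_mul_X_pow_pow (c : R) (s n D : ℕ) :
    coeff D ((X + C c * X ^ (s + 1)) ^ n) =
      ∑ j ∈ Finset.range (n + 1), if D = n + s * j then c ^ j * n.choose j else 0 := by
  have hfactor : (X : R⟦X⟧) + C c * X ^ (s + 1) = X * (C c * X ^ s + 1) := by ring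
  rw [hfactor, mul_pow, add_pow, Finset.mul_sum, map_sum]
  refine Finset.sum_congr rfl fun j _ => ?_
  have hterm : (X : R⟦X⟧) ^ n * ((C c * X ^ s) ^ j * 1 ^ (n - j) * (n.choose j : R⟦X⟧)) =
      C (c ^ j * n.choose j) * X ^ (n + s * j) := by
    rw [one_pow, mul_one, map_mul, map_pow, map_natCast]
    ring
  rw [hterm, coeff_C_mul_X_pow]

noncomputable def coeffSubstPoly (F : R⟦X⟧) (s D : ℕ) : Polynomial R :=
  ∑ n ∈ Finset.range (D + 1), ∑ j ∈ Finset.range (n + 1),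
    if D = n + s * j then Polynomial.monomial j (coeff n F * n.choose j) else 0

theorem eval_coeffSubstPoly (F : R⟦X⟧) (s D : ℕ) (c : R) :
    (coeffSubstPoly F s D).eval c = coeff D (F.subst (X + C c * X ^ (s + 1))) := by
  have hφ : constantCoeff ((X : R⟦X⟧) + C c * X ^ (s + 1)) = 0 := by simp
  rw [coeff_subst_eq_sum_range hφ, coeffSubstPoly, Polynomial.eval_finsetSum]
  refine Finset.sum_congr rfl fun n _ => ?_
  rw [coeff_X_add_C_mul_X_pow_pow, Polynomial.eval_finsetSum, Finset.mul_sum]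
  refine Finset.sum_congr rfl fun j _ => ?_
  split_ifs
  · rw [Polynomial.eval_monomial]
    ring
  · rw [Polynomial.eval_zero, mul_zero]

theorem coeffSubstPoly_eq_C {F : R⟦X⟧} {q s D : ℕ}
    (hlow : ∀ n j, 0 < j → coeff n F * n.choose j ≠ 0 → q + s ≤ n + s * j) (hD : D < q + s) :
    coeffSubstPoly F s D = Polynomial.C (coeff D F) := by
  have hterm : ∀ n j, 0 < j →
      (if D = n + s * j then Polynomial.monomial j (coeff n F * n.choose j) else 0) = 0 := by
    intro n j hj
    split_ifs with hDn
    · by_cases h : coeff n F * n.choose j = 0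
      · rw [h, map_zero]
      · have := hlow n j hj h
        omega
    · rfl
  rw [coeffSubstPoly, Finset.sum_eq_single D]
  · rw [Finset.sum_eq_single 0 (fun j _ hj => hterm D j (Nat.pos_of_ne_zero hj)) (by simp)]
    simp
  · intro n _ hn
    refine Finset.sum_eq_zero fun j _ => ?_
    rcases Nat.eq_zero_or_pos j with rfl | hj
    · rw [if_neg (by omega)]
    · exact hterm n j hj
  · simp

theorem coeff_one_coeffSubstPoly (F : R⟦X⟧) (q s : ℕ) :
    (coeffSubstPoly F s (q + s)).coeff 1 = coeff q F * q := by
  simp only [coeffSubstPoly, Polynomial.finsetSum_coeff, apply_ite (Polynomial.coeff · 1),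
    Polynomial.coeff_monomial, Polynomial.coeff_zero]
  rw [Finset.sum_eq_single q]
  · rw [Finset.sum_eq_single 1]
    · simp
    · intro j _ hj
      simp [hj]
    · intro h
      simp_all
  · intro n _ hn
    refine Finset.sum_eq_zero fun j _ => ?_
    split_ifs with hD hj <;> first | rfl | (subst hj; omega)
  · simp

theorem coeff_subst_X_add_C_mul_X_pow_of_lt {F : R⟦X⟧} {q s D : ℕ}
    (hlow : ∀ n j, 0 < j → coeff n F * n.choose j ≠ 0 → q + s ≤ n + s * j) (hD : D < q + s)
    (c : R) : coeff D (F.subst (X + C c * X ^ (s + 1))) = coeff D F := by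
  rw [← eval_coeffSubstPoly, coeffSubstPoly_eq_C hlow hD, Polynomial.eval_C]

theorem exists_coeff_subst_X_add_C_mul_X_pow_eq {K : Type*} [Field K] [IsAlgClosed K]
    {F : K⟦X⟧} {q : ℕ} (hq : coeff q F * q ≠ 0) (s : ℕ) (v : K) :
    ∃ c, coeff (q + s) (F.subst (X + C c * X ^ (s + 1))) = v := by
  set P := coeffSubstPoly F s (q + s) - Polynomial.C v
  have hP1 : P.coeff 1 ≠ 0 := by simpa [P, coeff_one_coeffSubstPoly] using hq
  have hdeg : P.degree ≠ 0 := fun h => hP1 (by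
    rw [Polynomial.eq_C_of_degree_eq_zero h, Polynomial.coeff_C, if_neg one_ne_zero])
  obtain ⟨c, hc⟩ := IsAlgClosed.exists_root P hdeg
  refine ⟨c, ?_⟩
  rwa [← eval_coeffSubstPoly, ← sub_eq_zero, ← Polynomial.eval_C (a := v) (x := c),
    ← Polynomial.eval_sub]

end PowerSeries

theorem Nat.pow_dvd_of_not_dvd_choose {p e n j : ℕ} (hp : p.Prime) (hn : p ^ e ∣ n) (hj : 0 < j)
    (hnj : ¬ p ∣ n.choose j) : p ^ e ∣ j := by
  obtain ⟨j, rfl⟩ := Nat.exists_eq_add_of_lt hj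
  cases n with
  | zero => simp at hnj
  | succ n =>
    have hcop : Nat.Coprime (p ^ e) ((n + 1).choose (j + 1)) :=
      ((hp.coprime_iff_not_dvd).mpr (by simpa using hnj)).pow_left e
    refine hcop.dvd_of_dvd_mul_left ?_
    simpa [Nat.add_one_mul_choose_eq] using hn.mul_right (n.choose j)

theorem Nat.add_le_add_mul_of_not_dvd_choose {p q s n j : ℕ} (hp : p.Prime) (hj : 0 < j)
    (hnj : ¬ p ∣ n.choose j)
    (hbound : 0 < n → n < q → q - n ≤ (p ^ padicValNat p n - 1) * s) :
    q + s ≤ n + s * j := by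
  have hsj : s ≤ s * j := Nat.le_mul_of_pos_right s hj
  rcases le_or_gt q n with hqn | hnq
  · omega
  have hn : 0 < n := Nat.pos_of_ne_zero fun h => hnj (by rw [h, Nat.choose_eq_zero_of_lt hj]; simp)
  obtain ⟨P, hP⟩ : ∃ P, p ^ padicValNat p n = P + 1 :=
    Nat.exists_eq_add_one.mpr (pow_pos hp.pos _)
  have hPj : P + 1 ≤ j :=
    hP ▸ Nat.le_of_dvd hj (Nat.pow_dvd_of_not_dvd_choose hp pow_padicValNat_dvd hj hnj)
  have hbound' := hbound hn hnq
  rw [hP, Nat.add_sub_cancel, mul_comm] at hbound'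
  have hsP : s * P + s ≤ s * j := by nlinarith
  omega

theorem exists_X_pow_dvd_subst_sub {K : Type*} [Field K] [IsAlgClosed K] {p : ℕ} [CharP K p]
    (hp : p.Prime) {f F g : K⟦X⟧} {q s : ℕ} (hqf : coeff q f ≠ 0) (hqp : ¬ p ∣ q)
    (hbound : ∀ n, 0 < n → n < q → coeff n f ≠ 0 → q - n ≤ (p ^ padicValNat p n - 1) * s)
    (hfg : (X : K⟦X⟧) ^ (q + 1) ∣ f - g) (hs : 0 < s) (hFg : (X : K⟦X⟧) ^ (q + s) ∣ F - g) :
    ∃ φ, (X : K⟦X⟧) ^ (s + 1) ∣ φ - X ∧ (X : K⟦X⟧) ^ (q + s + 1) ∣ F.subst φ - g := by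
  have hFf : ∀ n < q + 1, coeff n F = coeff n f := X_pow_dvd_sub_iff.mp <| by
    simpa using dvd_sub ((pow_dvd_pow X (by omega)).trans hFg) hfg
  have hlow : ∀ n j, 0 < j → coeff n F * n.choose j ≠ 0 → q + s ≤ n + s * j := by
    intro n j hj h
    have hnj : ¬ p ∣ n.choose j := by
      rw [← CharP.cast_eq_zero_iff K p]
      exact right_ne_zero_of_mul h
    refine Nat.add_le_add_mul_of_not_dvd_choose hp hj hnj fun hn hnq => hbound n hn hnq ?_
    rw [← hFf n (by omega)]
    exact left_ne_zero_of_mul h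
  have hqF : coeff q F * q ≠ 0 := by
    rw [hFf q (by omega)]
    exact mul_ne_zero hqf ((CharP.cast_eq_zero_iff K p q).not.mpr hqp)
  obtain ⟨c, hc⟩ := exists_coeff_subst_X_add_C_mul_X_pow_eq hqF s (coeff (q + s) g)
  refine ⟨X + C c * X ^ (s + 1), by simp, X_pow_dvd_sub_iff.mpr fun D hD => ?_⟩
  rcases Nat.lt_succ_iff_lt_or_eq.mp hD with hD | rfl
  · rw [coeff_subst_X_add_C_mul_X_pow_of_lt hlow hD, X_pow_dvd_sub_iff.mp hFg D hD]
  · exact hc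

open scoped Classical in
theorem sub_le_pow_padicValNat_sub_one_mul {R : Type*} [Semiring R] {p : ℕ} (hp : p.Prime)
    {f : R⟦X⟧} {m q k : ℕ} (hmin : ∀ i < m, coeff i f = 0)
    (hq' : q = sInf {n | coeff n f ≠ 0 ∧ ¬ p ∣ n})
    (hk : k = if m = q then 1 else
      ((Finset.Icc m (q - 1)).filter fun n => coeff n f ≠ 0).sup
        fun n => (q - n + (p ^ padicValNat p n - 1) - 1) / (p ^ padicValNat p n - 1))
    {n : ℕ} (hn : 0 < n) (hnq : n < q) (hfn : coeff n f ≠ 0) :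
    q - n ≤ (p ^ padicValNat p n - 1) * k := by
  have hpn : p ∣ n := by
    by_contra h
    exact Nat.notMem_of_lt_sInf (s := {n | coeff n f ≠ 0 ∧ ¬ p ∣ n}) (hq' ▸ hnq) ⟨hfn, h⟩
  have hmn : m ≤ n := not_lt.mp fun h => hfn (hmin n h)
  have : Fact p.Prime := ⟨hp⟩
  have hpow : p ≤ p ^ padicValNat p n :=
    Nat.le_self_pow (Nat.one_le_iff_ne_zero.mp (one_le_padicValNat_of_dvd hn.ne' hpn)) p
  rw [← ceilDiv_le_iff_le_mul (by have := hp.two_le; omega), Nat.ceilDiv_eq_add_pred_div, hk,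
    if_neg (by omega)]
  exact Finset.le_sup (f := fun n => (q - n + (p ^ padicValNat p n - 1) - 1) /
    (p ^ padicValNat p n - 1)) (by simp [hmn, hfn]; omega)

open scoped Classical in
theorem stmt_10_general (K : Type*) [Field K] [IsAlgClosed K] (p : ℕ) (hp : p.Prime) [CharP K p]
    (f : PowerSeries K)
    (m q k d : ℕ)
    (hmin : ∀ i < m, coeff i f = 0)
    (hq' : q = sInf {n | coeff n f ≠ 0 ∧ ¬ p ∣ n})
    (hqne : {n | coeff n f ≠ 0 ∧ ¬ p ∣ n}.Nonempty)
    (hk : k = if m = q then 1 else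
      ((Finset.Icc m (q - 1)).filter fun n => coeff n f ≠ 0).sup
        fun n => (q - n + (p ^ padicValNat p n - 1) - 1) / (p ^ padicValNat p n - 1))
    (hd : d = q + (k - 1)) :
    ∀ g : PowerSeries K, (∀ i ≤ d, coeff i g = coeff i f) → RightEquiv K f g := by
  intro g hg
  have hqf : coeff q f ≠ 0 ∧ ¬ p ∣ q := by
    rw [hq']
    exact Nat.sInf_mem hqne
  -- `k - 1 + 1` rather than `k`: then `d + 1 = q + (k - 1 + 1)` also when `k = 0`
  have hfg : (X : K⟦X⟧) ^ (q + (k - 1 + 1)) ∣ f - g :=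
    X_pow_dvd_sub_iff.mpr fun i hi => (hg i (by omega)).symm
  obtain ⟨ψ, hψ, rfl⟩ := exists_subst_eq_of_forall_approx hfg fun N F hF => by
    obtain ⟨φ, hφX, hFφ⟩ := exists_X_pow_dvd_subst_sub (s := k - 1 + 1 + N) hp hqf.1 hqf.2
      (fun n hn hnq hfn => (sub_le_pow_padicValNat_sub_one_mul hp hmin hq' hk hn hnq hfn).trans
        (Nat.mul_le_mul_left _ (by omega)))
      ((pow_dvd_pow X (by omega)).trans hfg) (by omega) (by rwa [← add_assoc])
    exact ⟨φ, (pow_dvd_pow X (by omega)).trans hφX, by rwa [← add_assoc] at hFφ⟩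
  exact ⟨substAlgEquiv ψ (constantCoeff_eq_zero_of_X_sq_dvd_sub_X hψ)
    (by simp [coeff_one_eq_one_of_X_sq_dvd_sub_X hψ]), substAlgEquiv_apply ..⟩

open scoped Classical in
theorem stmt_10 (K : Type*) [Field K] [IsAlgClosed K] (p : ℕ) (hp : p.Prime) [CharP K p]
    (f : PowerSeries K) (hf0 : constantCoeff f = 0) (hfin : MilnorFinite K f)
    (m q k d : ℕ)
    (hm : coeff m f ≠ 0) (hmin : ∀ i < m, coeff i f = 0)
    (hq : q = milnor K f + 1)
    (hq' : q = sInf {n | coeff n f ≠ 0 ∧ ¬ p ∣ n})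
    (hqne : {n | coeff n f ≠ 0 ∧ ¬ p ∣ n}.Nonempty)
    (hk : k = if m = q then 1 else
      ((Finset.Icc m (q - 1)).filter fun n => coeff n f ≠ 0).sup
        fun n => (q - n + (p ^ padicValNat p n - 1) - 1) / (p ^ padicValNat p n - 1))
    (hd : d = q + (k - 1)) :
    ∀ g : PowerSeries K, (∀ i ≤ d, coeff i g = coeff i f) → RightEquiv K f g :=
  stmt_10_general K p hp f m q k d hmin hq' hqne hk hd
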